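/- arXiv:2202.07109 — 2 statements merged into one kernel-verified Lean document; each statement's English description precedes it below -/
import Mathlib

section
/- Assume (A2) and (A5). Then μ is reducible if and only if for every i ∈ Ψ at least one of the following holds: (a) p_{i,j} + p_{i,j⁺} = p_{i⁺,j} + p_{i⁺,j⁺} for every j ∈ Ψ; (b) χ_{i⁺}·I_{1,σ} = χ_i·I_{2,σ} for every σ ∈ 𝒮*(i). -/
open scoped Classical ENNReal
open Filter MeasureTheory

noncomputable section

namespace MTM

/-- the edge relation of the directed graph `𝒢`: `(i,j) ∈ G₂ ↔ p i j > 0`. -/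
def edge (p : ℕ → ℕ → ℝ) (i j : ℕ) : Prop := 0 < p i j

/-- product of transition weights along a word. -/
def pword (p : ℕ → ℕ → ℝ) : List ℕ → ℝ
  | [] => 1
  | [_] => 1
  | a :: b :: t => p a b * pword p (b :: t)

/-- product of contraction ratios along a word. -/
def sword (sr : ℕ → ℕ → ℝ) : List ℕ → ℝ
  | [] => 1
  | [_] => 1
  | a :: b :: t => sr a b * sword sr (b :: t)

/-- `𝒯(σ)`: all lifts of a word, each letter `i` may be replaced by `i + N`. -/
def lifts (N : ℕ) : List ℕ → Finset (List ℕ)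
  | [] => {[]}
  | i :: t => (lifts N t).biUnion fun l => {i :: l, (i + N) :: l}

/-- `Γ(σ) = G_n ∩ 𝒯(σ)`. -/
def Gam (p : ℕ → ℕ → ℝ) (N : ℕ) (σ : List ℕ) : Finset (List ℕ) :=
  (lifts N σ).filter fun τ => τ.Chain' (edge p)

/-- words over the alphabet `Ψ = {1,…,N}`. -/
def isPsiWord (N : ℕ) (σ : List ℕ) : Prop :=
  σ ≠ [] ∧ ∀ x ∈ σ, x ∈ Finset.Icc 1 N

/-- `σ ∈ 𝒮_*`: a `Ψ`-word having at least one admissible lift. -/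
def isSword (p : ℕ → ℕ → ℝ) (N : ℕ) (σ : List ℕ) : Prop :=
  isPsiWord N σ ∧ (Gam p N σ).Nonempty

/-- `σ ∈ G_*`: admissible words over `Ω = {1,…,2N}`. -/
def isGword (p : ℕ → ℕ → ℝ) (N : ℕ) (σ : List ℕ) : Prop :=
  σ ≠ [] ∧ (∀ x ∈ σ, x ∈ Finset.Icc 1 (2 * N)) ∧ σ.Chain' (edge p)

/-- `σ ∈ H₁^*`: admissible words with all letters in `Ψ`. -/
def isH1word (p : ℕ → ℕ → ℝ) (N : ℕ) (σ : List ℕ) : Prop :=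
  σ ≠ [] ∧ (∀ x ∈ σ, x ∈ Finset.Icc 1 N) ∧ σ.Chain' (edge p)

/-- `σ ∈ H₂^*`: admissible words with all letters in `Υ = {N+1,…,2N}`. -/
def isH2word (p : ℕ → ℕ → ℝ) (N : ℕ) (σ : List ℕ) : Prop :=
  σ ≠ [] ∧ (∀ x ∈ σ, x ∈ Finset.Icc (N + 1) (2 * N)) ∧ σ.Chain' (edge p)

/-- `μ(J_σ) = Σ_{σ̃ ∈ Γ(σ)} χ_{σ̃₁} p_{σ̃}`. -/
def muJ (p : ℕ → ℕ → ℝ) (χ : ℕ → ℝ) (N : ℕ) (σ : List ℕ) : ℝ :=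
  ∑ τ ∈ Gam p N σ, χ (τ.headD 0) * pword p τ

/-- `ℰ_r(σ) = μ(J_σ) s_σ^r`, with `ℰ_r(θ) = 1` for the empty word. -/
def Er (p : ℕ → ℕ → ℝ) (χ : ℕ → ℝ) (sr : ℕ → ℕ → ℝ) (N : ℕ) (r : ℝ) (σ : List ℕ) : ℝ :=
  if σ = [] then 1 else muJ p χ N σ * sword sr σ ^ r

/-- `I_{1,σ}` resp. `I_{2,σ}`: the part of `μ(J_σ)` coming from lifts ending with `i`
(resp. with `i⁺`, when applied with `i + N`). -/
def Ipart (p : ℕ → ℕ → ℝ) (χ : ℕ → ℝ) (N : ℕ) (i : ℕ) (σ : List ℕ) : ℝ :=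
  ∑ τ ∈ (Gam p N σ).filter (fun τ => τ.getLastD 0 = i), χ (τ.headD 0) * pword p τ

/-- all words of a given length over a finite alphabet. -/
def wordsOfLen (S : Finset ℕ) : ℕ → Finset (List ℕ)
  | 0 => {[]}
  | n + 1 => (wordsOfLen S n).biUnion fun l => S.image fun a => a :: l

/-- `𝒮_n` as a finite set of words. -/
def Sn (p : ℕ → ℕ → ℝ) (N n : ℕ) : Finset (List ℕ) :=
  (wordsOfLen (Finset.Icc 1 N) n).filter (isSword p N)

/-- irreducibility of the sub-matrix of `p` indexed by `S`: the corresponding directed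
graph is strongly connected. -/
def irreducibleOn (p : ℕ → ℕ → ℝ) (S : Finset ℕ) : Prop :=
  ∀ i ∈ S, ∀ j ∈ S, ∃ c : List ℕ, (∀ x ∈ c, x ∈ S) ∧ List.Chain (edge p) i (c ++ [j])

/-- Assumption (A1): `P₁, P₂` irreducible and `P₄ = 0`. -/
def A1 (p : ℕ → ℕ → ℝ) (N : ℕ) : Prop :=
  irreducibleOn p (Finset.Icc 1 N) ∧
    irreducibleOn (fun a b => p (a + N) (b + N)) (Finset.Icc 1 N) ∧
    ∀ i ∈ Finset.Icc 1 N, ∀ j ∈ Finset.Icc 1 N, p (i + N) j = 0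

/-- Assumption (A2). -/
def A2 (p : ℕ → ℕ → ℝ) (N : ℕ) : Prop :=
  ∀ i ∈ Finset.Icc 1 N,
    2 ≤ ((Finset.Icc 1 N).filter fun j => 0 < p i j).card ∧
      2 ≤ ((Finset.Icc 1 N).filter fun j => 0 < p (i + N) (j + N)).card

/-- Assumption (A3): `ℳ_{i,j} = ∅` or `ℳ_{i,j} = {(i,j),(i,j⁺),(i⁺,j⁺)}`. -/
def A3 (p : ℕ → ℕ → ℝ) (N : ℕ) : Prop :=
  ∀ i ∈ Finset.Icc 1 N, ∀ j ∈ Finset.Icc 1 N,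
    (p i j = 0 ∧ p i (j + N) = 0 ∧ p (i + N) j = 0 ∧ p (i + N) (j + N) = 0) ∨
      (0 < p i j ∧ 0 < p i (j + N) ∧ p (i + N) j = 0 ∧ 0 < p (i + N) (j + N))

/-- Assumption (A4): `ℳ_{i,j} = ∅` or `ℳ_{i,j} = 𝒩_{i,j}`. -/
def A4 (p : ℕ → ℕ → ℝ) (N : ℕ) : Prop :=
  ∀ i ∈ Finset.Icc 1 N, ∀ j ∈ Finset.Icc 1 N,
    (p i j = 0 ∧ p i (j + N) = 0 ∧ p (i + N) j = 0 ∧ p (i + N) (j + N) = 0) ∨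
      (0 < p i j ∧ 0 < p i (j + N) ∧ 0 < p (i + N) j ∧ 0 < p (i + N) (j + N))

/-- Assumption (A5): `P₁` is irreducible. -/
def A5 (p : ℕ → ℕ → ℝ) (N : ℕ) : Prop := irreducibleOn p (Finset.Icc 1 N)

/-- `T_σ = T_{σ₁σ₂} ∘ ⋯ ∘ T_{σ_{n-1}σ_n}` (identity for words of length `≤ 1`). -/
def Tword {E : Type*} (T : ℕ → ℕ → E → E) : List ℕ → E → E
  | [], x => x
  | [_], x => x
  | a :: b :: t, x => T a b (Tword T (b :: t) x)

/-- the cylinder set `J_σ = T_σ (J_{σ_n})`. -/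
def Jword {E : Type*} (T : ℕ → ℕ → E → E) (J : ℕ → Set E) (σ : List ℕ) : Set E :=
  Tword T σ '' J (σ.getLastD 0)

/-- the Mauldin–Williams fractal `K = ⋂_k ⋃_{σ ∈ G_k} J_σ`. -/
def attractor {E : Type*} (p : ℕ → ℕ → ℝ) (N : ℕ) (T : ℕ → ℕ → E → E) (J : ℕ → Set E) :
    Set E :=
  ⋂ n : ℕ, ⋃ σ ∈ {σ : List ℕ | isGword p N σ ∧ σ.length = n + 1}, Jword T J σ

/-- `μ` is reducible: `μ = ν₁ ∘ π₁⁻¹` for the Markov-type measure `ν₁` associated with some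
`N × N` row-stochastic matrix and positive probability vector; equivalently, the cylinder
values of `μ` are of Markov type. -/
def reducible {E : Type*} [MeasurableSpace E] (p : ℕ → ℕ → ℝ) (N : ℕ)
    (T : ℕ → ℕ → E → E) (J : ℕ → Set E) (μ : Measure E) : Prop :=
  ∃ (pt : ℕ → ℕ → ℝ) (χt : ℕ → ℝ),
    (∀ i ∈ Finset.Icc 1 N, ∀ j ∈ Finset.Icc 1 N, 0 ≤ pt i j) ∧
      (∀ i ∈ Finset.Icc 1 N, ∑ j ∈ Finset.Icc 1 N, pt i j = 1) ∧
      (∀ i ∈ Finset.Icc 1 N, 0 < χt i) ∧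
      (∑ i ∈ Finset.Icc 1 N, χt i = 1) ∧
      ∀ σ : List ℕ, isSword p N σ →
        μ (Jword T J σ) = ENNReal.ofReal (χt (σ.headD 0) * pword pt σ)

/-- `e^r_{k,r}(μ)`: the `k`-th quantization error of order `r`, to the `r`-th power. -/
def quantErr {E : Type*} [PseudoMetricSpace E] [MeasurableSpace E] (r : ℝ) (μ : Measure E)
    (k : ℕ) : ℝ :=
  sInf ((fun α : Set E => ∫ x, Metric.infDist x α ^ r ∂μ) ''
    {α : Set E | α.Nonempty ∧ α.Finite ∧ α.ncard ≤ k})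

/-- the upper quantization coefficient `Q̄_r^s(μ) = limsup_k k^{r/s} e^r_{k,r}(μ)`. -/
def upperQC {E : Type*} [PseudoMetricSpace E] [MeasurableSpace E] (r s : ℝ)
    (μ : Measure E) : ℝ≥0∞ :=
  limsup (fun k : ℕ => ENNReal.ofReal ((k : ℝ) ^ (r / s) * quantErr r μ k)) atTop

/-- the lower quantization coefficient `Q̲_r^s(μ)`. -/
def lowerQC {E : Type*} [PseudoMetricSpace E] [MeasurableSpace E] (r s : ℝ)
    (μ : Measure E) : ℝ≥0∞ :=
  liminf (fun k : ℕ => ENNReal.ofReal ((k : ℝ) ^ (r / s) * quantErr r μ k)) atTop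

/-- the upper quantization dimension `D̄_r(μ) = limsup_k log k / (-log e_{k,r}(μ))`. -/
def upperQD {E : Type*} [PseudoMetricSpace E] [MeasurableSpace E] (r : ℝ)
    (μ : Measure E) : ℝ :=
  limsup (fun k : ℕ => Real.log k / (-Real.log (quantErr r μ k ^ (1 / r)))) atTop

/-- the lower quantization dimension `D̲_r(μ)`. -/
def lowerQD {E : Type*} [PseudoMetricSpace E] [MeasurableSpace E] (r : ℝ)
    (μ : Measure E) : ℝ :=
  liminf (fun k : ℕ => Real.log k / (-Real.log (quantErr r μ k ^ (1 / r)))) atTop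

/-- spectral radius of a real matrix: the largest modulus of a complex eigenvalue. -/
def specRad {n : Type*} [Fintype n] [DecidableEq n] (M : Matrix n n ℝ) : ℝ :=
  sSup (norm '' spectrum ℂ (M.map (algebraMap ℝ ℂ)))

/-- `A₁(s) = ((p_{i,j} s_{i,j}^r)^s)_{i,j=1}^N`. -/
def matA1 (p sr : ℕ → ℕ → ℝ) (N : ℕ) (r s : ℝ) : Matrix (Fin N) (Fin N) ℝ :=
  Matrix.of fun i j => (p (i.1 + 1) (j.1 + 1) * sr (i.1 + 1) (j.1 + 1) ^ r) ^ s

/-- `A₂(s) = ((p_{i⁺,j⁺} s_{i⁺,j⁺}^r)^s)_{i,j=1}^N`. -/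
def matA2 (p sr : ℕ → ℕ → ℝ) (N : ℕ) (r s : ℝ) : Matrix (Fin N) (Fin N) ℝ :=
  Matrix.of fun i j => (p (i.1 + 1 + N) (j.1 + 1 + N) * sr (i.1 + 1 + N) (j.1 + 1 + N) ^ r) ^ s

/-- `A₃(s) = ((p_{i,j⁺} s_{i,j⁺}^r)^s)_{i,j=1}^N`. -/
def matA3 (p sr : ℕ → ℕ → ℝ) (N : ℕ) (r s : ℝ) : Matrix (Fin N) (Fin N) ℝ :=
  Matrix.of fun i j => (p (i.1 + 1) (j.1 + 1 + N) * sr (i.1 + 1) (j.1 + 1 + N) ^ r) ^ s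

/-- `A₄(s) = ((p_{i⁺,j} s_{i⁺,j}^r)^s)_{i,j=1}^N`. -/
def matA4 (p sr : ℕ → ℕ → ℝ) (N : ℕ) (r s : ℝ) : Matrix (Fin N) (Fin N) ℝ :=
  Matrix.of fun i j => (p (i.1 + 1 + N) (j.1 + 1) * sr (i.1 + 1 + N) (j.1 + 1) ^ r) ^ s

/-- the block matrix `A(s) = [[A₁(s), A₃(s)], [A₄(s), A₂(s)]]`. -/
def matA (p sr : ℕ → ℕ → ℝ) (N : ℕ) (r s : ℝ) :
    Matrix (Fin N ⊕ Fin N) (Fin N ⊕ Fin N) ℝ :=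
  Matrix.fromBlocks (matA1 p sr N r s) (matA3 p sr N r s) (matA4 p sr N r s) (matA2 p sr N r s)

/-- `p̲ = min_{(i,j) ∈ G₂} p_{i,j}`. -/
def pMin (p : ℕ → ℕ → ℝ) (N : ℕ) : ℝ :=
  sInf {x | ∃ i ∈ Finset.Icc 1 (2 * N), ∃ j ∈ Finset.Icc 1 (2 * N), 0 < p i j ∧ x = p i j}

/-- `p̄ = max_{(i,j) ∈ G₂} p_{i,j}`. -/
def pMax (p : ℕ → ℕ → ℝ) (N : ℕ) : ℝ :=
  sSup {x | ∃ i ∈ Finset.Icc 1 (2 * N), ∃ j ∈ Finset.Icc 1 (2 * N), 0 < p i j ∧ x = p i j}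

/-- `s̲ = min_{(i,j) ∈ 𝒮₂} s_{i,j}`. -/
def sMin (p sr : ℕ → ℕ → ℝ) (N : ℕ) : ℝ :=
  sInf {x | ∃ i ∈ Finset.Icc 1 N, ∃ j ∈ Finset.Icc 1 N, isSword p N [i, j] ∧ x = sr i j}

/-- `s̄ = max_{(i,j) ∈ 𝒮₂} s_{i,j}`. -/
def sMax (p sr : ℕ → ℕ → ℝ) (N : ℕ) : ℝ :=
  sSup {x | ∃ i ∈ Finset.Icc 1 N, ∃ j ∈ Finset.Icc 1 N, isSword p N [i, j] ∧ x = sr i j}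

/-- `χ̲ = min_{1 ≤ i ≤ 2N} χ_i`. -/
def chiMin (χ : ℕ → ℝ) (N : ℕ) : ℝ := sInf {x | ∃ i ∈ Finset.Icc 1 (2 * N), x = χ i}

/-- `χ̄ = max_{1 ≤ i ≤ 2N} χ_i`. -/
def chiMax (χ : ℕ → ℝ) (N : ℕ) : ℝ := sSup {x | ∃ i ∈ Finset.Icc 1 (2 * N), x = χ i}

/-- `t` satisfies the defining property of `t_r`:
`(1/n) log Σ_{σ ∈ 𝒮_n} ℰ_r(σ)^{t/(t+r)} → 0`. -/
def trCond (p : ℕ → ℕ → ℝ) (χ : ℕ → ℝ) (sr : ℕ → ℕ → ℝ) (N : ℕ) (r t : ℝ) : Prop :=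
  0 < t ∧
    Tendsto (fun n : ℕ => (n : ℝ)⁻¹ *
      Real.log (∑ σ ∈ Sn p N n, Er p χ sr N r σ ^ (t / (t + r)))) atTop (nhds 0)

/-- the initial word of length `n` of an infinite sequence. -/
def seqTake (x : ℕ → ℕ) (n : ℕ) : List ℕ := (List.range n).map x

/-- `Γ` is a finite maximal antichain among the words satisfying `W`, with respect to the
infinite sequences satisfying `Wseq`. -/
def isMaxAntichain (W : List ℕ → Prop) (Wseq : (ℕ → ℕ) → Prop) (Γ : Finset (List ℕ)) : Prop :=
  (∀ σ ∈ Γ, W σ) ∧ (∀ σ ∈ Γ, ∀ τ ∈ Γ, σ ≠ τ → ¬σ <+: τ) ∧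
    ∀ x : ℕ → ℕ, Wseq x → ∃ n : ℕ, 1 ≤ n ∧ seqTake x n ∈ Γ

/-- infinite admissible sequences with letters in `Ψ`. -/
def isH1seq (p : ℕ → ℕ → ℝ) (N : ℕ) (x : ℕ → ℕ) : Prop :=
  (∀ n, x n ∈ Finset.Icc 1 N) ∧ ∀ n, 0 < p (x n) (x (n + 1))

/-- infinite admissible sequences with letters in `Υ`. -/
def isH2seq (p : ℕ → ℕ → ℝ) (N : ℕ) (x : ℕ → ℕ) : Prop :=
  (∀ n, x n ∈ Finset.Icc (N + 1) (2 * N)) ∧ ∀ n, 0 < p (x n) (x (n + 1))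

/-- minimal length of a word in `Γ`. -/
def minLen (Γ : Finset (List ℕ)) : ℕ := sInf {n | ∃ σ ∈ Γ, σ.length = n}

/-- maximal length of a word in `Γ`. -/
def maxLen (Γ : Finset (List ℕ)) : ℕ := sSup {n | ∃ σ ∈ Γ, σ.length = n}

/-- `Λ_{k,r} = {σ ∈ 𝒮^* : ℰ_r(σ) < c₁^k ≤ ℰ_r(σ^♭)}`. -/
def LamSet (p : ℕ → ℕ → ℝ) (χ : ℕ → ℝ) (sr : ℕ → ℕ → ℝ) (N : ℕ) (r c1 : ℝ) (k : ℕ) :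
    Set (List ℕ) :=
  {σ | isSword p N σ ∧ Er p χ sr N r σ < c1 ^ k ∧ c1 ^ k ≤ Er p χ sr N r σ.dropLast}

/-- `ℒ(σ) = {σ, σ⁺} ∪ {σ|_h ∗ (σ_{h+1}⁺, …, σ_n⁺) : 1 ≤ h ≤ n − 1}`. -/
def Lset (N : ℕ) (σ : List ℕ) : Finset (List ℕ) :=
  (Finset.range (σ.length + 1)).image fun h =>
    σ.take h ++ (σ.drop h).map (fun x => x + N)


/-!
Split `μ(J_σ)` by the last letter of the admissible lift: for `σ ∈ 𝒮*(i)`,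
`μ(J_σ) = I_{1,σ} + I_{2,σ}` and `μ(J_{σ*j}) = I_{1,σ} a_j + I_{2,σ} b_j` with
`a_j = p_{i,j} + p_{i,j⁺}`, `b_j = p_{i⁺,j} + p_{i⁺,j⁺}` (`fibreProb`).

If `μ` is reducible with matrix `p̃`, then `μ(J_{σ*j}) ≤ μ(J_σ) p̃_{i,j}` (equality unless the
left side vanishes) and both sides sum to `μ(J_σ)` over `j`, so
`I_{1,σ} a_j + I_{2,σ} b_j = (I_{1,σ} + I_{2,σ}) p̃_{i,j}`. Comparing this with the case `σ = (i)`,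
where the `I`'s are `χ_i, χ_{i⁺}`, gives `(a_j - b_j)(χ_i I_{2,σ} - χ_{i⁺} I_{1,σ}) = 0`.

Conversely, (a) or (b) make `μ(J_{σ*j}) = μ(J_σ) p̃_{i,j}` for
`p̃_{i,j} = (χ_i a_j + χ_{i⁺} b_j) / (χ_i + χ_{i⁺})`, so `μ` is the Markov measure of `p̃`
with initial vector `χ_i + χ_{i⁺}`.
-/

open Finset

lemma headD_append_of_ne_nil {α : Type*} {l : List α} (hl : l ≠ []) (l' : List α) (d : α) :
    (l ++ l').headD d = l.headD d := by
  obtain ⟨a, t, rfl⟩ := List.exists_cons_of_ne_nil hl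
  rfl

section Words

variable {q : ℕ → ℕ → ℝ}

lemma pword_append_singleton (x : ℕ) :
    ∀ {τ : List ℕ}, τ ≠ [] → pword q (τ ++ [x]) = pword q τ * q (τ.getLastD 0) x
  | [a], _ => by simp [pword]
  | a :: b :: t, _ => by
    have ih := pword_append_singleton x (List.cons_ne_nil b t)
    simp only [List.cons_append, List.getLastD_cons] at ih ⊢
    rw [pword, ih, pword]
    ring

lemma pword_pos : ∀ {τ : List ℕ}, τ.IsChain (edge q) → 0 < pword q τ
  | [], _ | [_], _ => by simp [pword]
  | a :: b :: t, h => by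
    rw [List.isChain_cons_cons] at h
    exact mul_pos h.1 (pword_pos h.2)

lemma pword_nonneg : ∀ {τ : List ℕ}, (∀ a ∈ τ, ∀ b ∈ τ, 0 ≤ q a b) → 0 ≤ pword q τ
  | [], _ | [_], _ => by simp [pword]
  | a :: b :: t, h =>
    mul_nonneg (h a (by simp) b (by simp)) <| pword_nonneg fun x hx y hy =>
      h x (List.mem_cons_of_mem a hx) y (List.mem_cons_of_mem a hy)

lemma pword_eq_zero_of_not_chain (hq : ∀ a b, 0 ≤ q a b) :
    ∀ {τ : List ℕ}, ¬τ.IsChain (edge q) → pword q τ = 0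
  | [], h | [_], h => absurd (by simp) h
  | a :: b :: t, h => by
    rw [List.isChain_cons_cons, not_and_or] at h
    rcases h with h | h
    · rw [pword, le_antisymm (not_lt.mp h) (hq a b), zero_mul]
    · rw [pword, pword_eq_zero_of_not_chain hq h, mul_zero]

end Words

section Lifts

variable {N : ℕ}

lemma lifts_append_singleton (σ : List ℕ) (j : ℕ) :
    lifts N (σ ++ [j]) = (lifts N σ).biUnion fun l => {l ++ [j], l ++ [j + N]} := by
  induction σ with
  | nil => ext τ; simp [lifts]
  | cons i t ih =>
    ext τ
    simp only [List.cons_append, lifts, ih, mem_biUnion, mem_insert, mem_singleton]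
    constructor
    · rintro ⟨l, ⟨m, hm, rfl | rfl⟩, rfl | rfl⟩
      exacts [⟨_, ⟨m, hm, .inl rfl⟩, .inl rfl⟩, ⟨_, ⟨m, hm, .inr rfl⟩, .inl rfl⟩,
        ⟨_, ⟨m, hm, .inl rfl⟩, .inr rfl⟩, ⟨_, ⟨m, hm, .inr rfl⟩, .inr rfl⟩]
    · rintro ⟨l, ⟨m, hm, rfl | rfl⟩, rfl | rfl⟩
      exacts [⟨_, ⟨m, hm, .inl rfl⟩, .inl rfl⟩, ⟨_, ⟨m, hm, .inr rfl⟩, .inl rfl⟩,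
        ⟨_, ⟨m, hm, .inl rfl⟩, .inr rfl⟩, ⟨_, ⟨m, hm, .inr rfl⟩, .inr rfl⟩]

lemma ne_nil_of_mem_lifts {σ τ : List ℕ} (hσ : σ ≠ []) (hτ : τ ∈ lifts N σ) : τ ≠ [] := by
  obtain ⟨i, t, rfl⟩ := List.exists_cons_of_ne_nil hσ
  simp only [lifts, mem_biUnion, mem_insert, mem_singleton] at hτ
  obtain ⟨l, -, rfl | rfl⟩ := hτ <;> simp

lemma headD_of_mem_lifts {σ τ : List ℕ} (hτ : τ ∈ lifts N σ) :
    τ.headD 0 = σ.headD 0 ∨ τ.headD 0 = σ.headD 0 + N := by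
  cases σ with
  | nil => simp_all [lifts]
  | cons i t =>
    simp only [lifts, mem_biUnion, mem_insert, mem_singleton] at hτ
    obtain ⟨l, -, rfl | rfl⟩ := hτ <;> simp

lemma getLastD_of_mem_lifts {σ τ : List ℕ} (hσ : σ ≠ []) (hτ : τ ∈ lifts N σ) :
    τ.getLastD 0 = σ.getLastD 0 ∨ τ.getLastD 0 = σ.getLastD 0 + N := by
  obtain ⟨σ', j, rfl⟩ := (List.eq_nil_or_concat' σ).resolve_left hσ
  simp only [lifts_append_singleton, mem_biUnion, mem_insert, mem_singleton] at hτ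
  obtain ⟨l, -, rfl | rfl⟩ := hτ <;> simp

lemma Gam_singleton (p : ℕ → ℕ → ℝ) (i : ℕ) : Gam p N [i] = {[i], [i + N]} := by
  have hlifts : lifts N [i] = {[i], [i + N]} := by ext τ; simp [lifts]
  rw [Gam, hlifts]
  refine filter_true_of_mem fun τ hτ => ?_
  rcases mem_insert.mp hτ with rfl | hτ
  · exact List.isChain_singleton _
  · rw [mem_singleton.mp hτ]
    exact List.isChain_singleton _

end Lifts

lemma sum_Icc_add_shift {M : Type*} [AddCommMonoid M] (f : ℕ → M) (N : ℕ) :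
    ∑ j ∈ Icc 1 N, (f j + f (j + N)) = ∑ j ∈ Icc 1 (2 * N), f j := by
  have hIcc : ∀ n, Icc 1 n = Ioc 0 n := Icc_add_one_left_eq_Ioc 0
  have hshift : ∑ j ∈ Icc 1 N, f (j + N) = ∑ j ∈ Ioc N (2 * N), f j := by
    rw [two_mul, ← Icc_add_one_left_eq_Ioc, add_comm N 1, ← map_add_right_Icc, sum_map]
    rfl
  rw [sum_add_distrib, hshift, hIcc, hIcc, sum_Ioc_consecutive _ (Nat.zero_le N) (by omega)]

lemma mem_Icc_two_mul {N i : ℕ} (hi : i ∈ Icc 1 N) :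
    i ∈ Icc 1 (2 * N) ∧ i + N ∈ Icc 1 (2 * N) := by
  simp only [mem_Icc] at hi ⊢
  omega

lemma headD_mem_of_isPsiWord {N : ℕ} {σ : List ℕ} (hσ : isPsiWord N σ) :
    σ.headD 0 ∈ Icc 1 N := by
  obtain ⟨a, t, rfl⟩ := List.exists_cons_of_ne_nil hσ.1
  exact hσ.2 a List.mem_cons_self

lemma getLastD_mem_of_isPsiWord {N : ℕ} {σ : List ℕ} (hσ : isPsiWord N σ) :
    σ.getLastD 0 ∈ Icc 1 N := by
  obtain ⟨σ', j, rfl⟩ := (List.eq_nil_or_concat' σ).resolve_left hσ.1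
  simpa using hσ.2 j (by simp)

lemma isPsiWord_of_append_singleton {N : ℕ} {σ : List ℕ} {j : ℕ} (hσ : σ ≠ [])
    (h : isPsiWord N (σ ++ [j])) : isPsiWord N σ :=
  ⟨hσ, fun x hx => h.2 x (List.mem_append_left _ hx)⟩

lemma isPsiWord_append_singleton {N : ℕ} {σ : List ℕ} {j : ℕ} (hσ : isPsiWord N σ)
    (hj : j ∈ Icc 1 N) : isPsiWord N (σ ++ [j]) :=
  ⟨by simp, fun x hx => (List.mem_append.mp hx).elim (hσ.2 x) (by simp_all)⟩

def fibreProb (p : ℕ → ℕ → ℝ) (N k j : ℕ) : ℝ := p k j + p k (j + N)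

lemma sum_fibreProb {p : ℕ → ℕ → ℝ} {N k : ℕ}
    (hpsum : ∀ i ∈ Icc 1 (2 * N), ∑ j ∈ Icc 1 (2 * N), p i j = 1) (hk : k ∈ Icc 1 (2 * N)) :
    ∑ j ∈ Icc 1 N, fibreProb p N k j = 1 :=
  (sum_Icc_add_shift (p k) N).trans (hpsum k hk)

section Cylinders

variable {p : ℕ → ℕ → ℝ} {χ : ℕ → ℝ} {N : ℕ}

lemma sum_Gam_eq_sum_lifts (hp0 : ∀ i j, 0 ≤ p i j) {F : List ℕ → ℝ}
    (hF : ∀ τ, pword p τ = 0 → F τ = 0) (σ : List ℕ) :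
    ∑ τ ∈ Gam p N σ, F τ = ∑ τ ∈ lifts N σ, F τ :=
  sum_filter_of_ne fun τ _ hτ => by_contra fun h => hτ (hF τ (pword_eq_zero_of_not_chain hp0 h))

lemma sum_Gam_split (hN : N ≠ 0) {σ : List ℕ} (hσ : σ ≠ []) (F : List ℕ → ℝ) :
    ∑ τ ∈ Gam p N σ, F τ =
      ∑ τ ∈ Gam p N σ with τ.getLastD 0 = σ.getLastD 0, F τ +
        ∑ τ ∈ Gam p N σ with τ.getLastD 0 = σ.getLastD 0 + N, F τ := by
  rw [← sum_filter_add_sum_filter_not (Gam p N σ) (fun τ => τ.getLastD 0 = σ.getLastD 0)]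
  congr 2
  refine filter_congr fun τ hτ => ?_
  rcases getLastD_of_mem_lifts hσ (mem_filter.mp hτ).1 with h | h <;> rw [h] <;> omega

lemma muJ_split (hN : N ≠ 0) {σ : List ℕ} (hσ : σ ≠ []) :
    muJ p χ N σ = Ipart p χ N (σ.getLastD 0) σ + Ipart p χ N (σ.getLastD 0 + N) σ :=
  sum_Gam_split hN hσ _

lemma muJ_append_singleton (hp0 : ∀ i j, 0 ≤ p i j) (hN : N ≠ 0) {σ : List ℕ} (hσ : σ ≠ [])
    (j : ℕ) :
    muJ p χ N (σ ++ [j]) =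
      Ipart p χ N (σ.getLastD 0) σ * fibreProb p N (σ.getLastD 0) j +
        Ipart p χ N (σ.getLastD 0 + N) σ * fibreProb p N (σ.getLastD 0 + N) j := by
  have hdisj : (lifts N σ : Set (List ℕ)).PairwiseDisjoint
      fun l => ({l ++ [j], l ++ [j + N]} : Finset (List ℕ)) := by
    intro l₁ _ l₂ _ hne
    simp only [Function.onFun, disjoint_left, mem_insert, mem_singleton]
    rintro τ (rfl | rfl) (h | h) <;> exact hne (List.append_inj' h rfl).1
  have hsum : muJ p χ N (σ ++ [j]) = ∑ τ ∈ Gam p N σ,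
      χ (τ.headD 0) * pword p τ * fibreProb p N (τ.getLastD 0) j := by
    rw [muJ, sum_Gam_eq_sum_lifts hp0 (by simp_all), sum_Gam_eq_sum_lifts hp0 (by simp_all),
      lifts_append_singleton, sum_biUnion hdisj]
    refine sum_congr rfl fun l hl => ?_
    have hl : l ≠ [] := ne_nil_of_mem_lifts hσ hl
    rw [sum_pair (by simpa using hN), pword_append_singleton _ hl, pword_append_singleton _ hl,
      headD_append_of_ne_nil hl, headD_append_of_ne_nil hl, fibreProb]
    ring
  rw [hsum, sum_Gam_split hN hσ, Ipart, Ipart, sum_mul, sum_mul]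
  congr 1 <;> exact sum_congr rfl fun τ hτ => by rw [(mem_filter.mp hτ).2]


lemma Ipart_singleton_self (hN : N ≠ 0) (i : ℕ) : Ipart p χ N i [i] = χ i := by
  simp [Ipart, Gam_singleton, filter_insert, filter_singleton, pword, hN]

lemma Ipart_singleton_add (hN : N ≠ 0) (i : ℕ) : Ipart p χ N (i + N) [i] = χ (i + N) := by
  simp [Ipart, Gam_singleton, filter_insert, filter_singleton, pword, hN]

lemma muJ_singleton (hN : N ≠ 0) (i : ℕ) : muJ p χ N [i] = χ i + χ (i + N) := by
  rw [muJ_split hN (List.cons_ne_nil i [])]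
  exact congrArg₂ (· + ·) (Ipart_singleton_self hN i) (Ipart_singleton_add hN i)

lemma isSword_singleton {i : ℕ} (hi : i ∈ Icc 1 N) : isSword p N [i] :=
  ⟨⟨List.cons_ne_nil i [], by simpa using hi⟩, by simp [Gam_singleton]⟩

lemma weight_nonneg_of_mem_Gam (hχpos : ∀ i ∈ Icc 1 (2 * N), 0 < χ i) {σ τ : List ℕ}
    (hσ : isPsiWord N σ) (hτ : τ ∈ Gam p N σ) : 0 ≤ χ (τ.headD 0) * pword p τ := by
  obtain ⟨hlift, hchain⟩ := mem_filter.mp hτ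
  have hΩ := mem_Icc_two_mul (headD_mem_of_isPsiWord hσ)
  refine mul_nonneg (hχpos _ ?_).le (pword_pos hchain).le
  rcases headD_of_mem_lifts hlift with h | h <;> rw [h]
  exacts [hΩ.1, hΩ.2]

lemma Ipart_nonneg (hχpos : ∀ i ∈ Icc 1 (2 * N), 0 < χ i) {σ : List ℕ} (hσ : isPsiWord N σ)
    (i : ℕ) : 0 ≤ Ipart p χ N i σ :=
  sum_nonneg fun _ hτ => weight_nonneg_of_mem_Gam hχpos hσ (mem_filter.mp hτ).1

lemma muJ_nonneg (hχpos : ∀ i ∈ Icc 1 (2 * N), 0 < χ i) {σ : List ℕ} (hσ : isPsiWord N σ) :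
    0 ≤ muJ p χ N σ :=
  sum_nonneg fun _ hτ => weight_nonneg_of_mem_Gam hχpos hσ hτ

lemma isSword_of_muJ_ne_zero {σ : List ℕ} (hσ : isPsiWord N σ) (h : muJ p χ N σ ≠ 0) :
    isSword p N σ :=
  ⟨hσ, nonempty_of_sum_ne_zero h⟩

lemma Ipart_eq_zero_of_not_isSword {σ : List ℕ} (hσ : isPsiWord N σ) (h : ¬isSword p N σ)
    (i : ℕ) : Ipart p χ N i σ = 0 := by
  have hΓ : Gam p N σ = ∅ := not_nonempty_iff_eq_empty.mp fun hne => h ⟨hσ, hne⟩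
  simp [Ipart, hΓ]

lemma sum_muJ_append_singleton (hp0 : ∀ i j, 0 ≤ p i j) (hN : N ≠ 0)
    (hpsum : ∀ i ∈ Icc 1 (2 * N), ∑ j ∈ Icc 1 (2 * N), p i j = 1) {σ : List ℕ}
    (hσ : isPsiWord N σ) :
    ∑ j ∈ Icc 1 N, muJ p χ N (σ ++ [j]) = muJ p χ N σ := by
  have hΩ := mem_Icc_two_mul (getLastD_mem_of_isPsiWord hσ)
  simp_rw [muJ_append_singleton hp0 hN hσ.1]
  rw [sum_add_distrib, ← mul_sum, ← mul_sum, sum_fibreProb hpsum hΩ.1, sum_fibreProb hpsum hΩ.2,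
    mul_one, mul_one, muJ_split hN hσ.1]

end Cylinders

lemma eq_or_mul_eq_mul_of_mix_eq {a b c w₁ w₂ v₁ v₂ : ℝ}
    (hw : w₁ * a + w₂ * b = (w₁ + w₂) * c) (hv : v₁ * a + v₂ * b = (v₁ + v₂) * c) :
    a = b ∨ w₂ * v₁ = w₁ * v₂ := by
  have h : (a - b) * (w₁ * v₂ - w₂ * v₁) = 0 := by
    linear_combination (v₁ + v₂) * hw - (w₁ + w₂) * hv
  rcases mul_eq_zero.mp h with h | h
  · exact .inl (sub_eq_zero.mp h)
  · exact .inr (sub_eq_zero.mp h).symm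

lemma mix_eq_mul_div_of_eq_or {a b w₁ w₂ v₁ v₂ : ℝ} (hw : w₁ + w₂ ≠ 0)
    (h : a = b ∨ w₂ * v₁ = w₁ * v₂) :
    v₁ * a + v₂ * b = (v₁ + v₂) * ((w₁ * a + w₂ * b) / (w₁ + w₂)) := by
  rw [mul_div_assoc', eq_div_iff hw]
  rcases h with rfl | h
  · ring
  · linear_combination (a - b) * h

def reducedMatrix (p : ℕ → ℕ → ℝ) (χ : ℕ → ℝ) (N i j : ℕ) : ℝ :=
  (χ i * fibreProb p N i j + χ (i + N) * fibreProb p N (i + N) j) / (χ i + χ (i + N))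

section Reducibility

variable {p : ℕ → ℕ → ℝ} {χ : ℕ → ℝ} {N : ℕ}

lemma muJ_eq_of_measure_eq {E : Type*} [MeasurableSpace E] {T : ℕ → ℕ → E → E}
    {J : ℕ → Set E} {μ : Measure E} (hχpos : ∀ i ∈ Icc 1 (2 * N), 0 < χ i)
    (hμ : ∀ σ, isSword p N σ → μ (Jword T J σ) = ENNReal.ofReal (muJ p χ N σ))
    {pt : ℕ → ℕ → ℝ} {χt : ℕ → ℝ} (hpt0 : ∀ i ∈ Icc 1 N, ∀ j ∈ Icc 1 N, 0 ≤ pt i j)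
    (hχt : ∀ i ∈ Icc 1 N, 0 < χt i)
    (hrep : ∀ σ, isSword p N σ →
      μ (Jword T J σ) = ENNReal.ofReal (χt (σ.headD 0) * pword pt σ))
    {σ : List ℕ} (hσ : isSword p N σ) :
    muJ p χ N σ = χt (σ.headD 0) * pword pt σ := by
  have hweight : 0 ≤ χt (σ.headD 0) * pword pt σ :=
    mul_nonneg (hχt _ (headD_mem_of_isPsiWord hσ.1)).le
      (pword_nonneg fun a ha b hb => hpt0 a (hσ.1.2 a ha) b (hσ.1.2 b hb))
  exact (ENNReal.ofReal_eq_ofReal_iff (muJ_nonneg hχpos hσ.1) hweight).mp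
    ((hμ σ hσ).symm.trans (hrep σ hσ))

section Markov

variable {pt : ℕ → ℕ → ℝ} {χt : ℕ → ℝ}

lemma muJ_append_singleton_of_markov (hp0 : ∀ i j, 0 ≤ p i j) (hN : N ≠ 0)
    (hpsum : ∀ i ∈ Icc 1 (2 * N), ∑ j ∈ Icc 1 (2 * N), p i j = 1)
    (hχpos : ∀ i ∈ Icc 1 (2 * N), 0 < χ i) (hpt0 : ∀ i ∈ Icc 1 N, ∀ j ∈ Icc 1 N, 0 ≤ pt i j)
    (hpt1 : ∀ i ∈ Icc 1 N, ∑ j ∈ Icc 1 N, pt i j = 1)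
    (hmarkov : ∀ σ, isSword p N σ → muJ p χ N σ = χt (σ.headD 0) * pword pt σ)
    {σ : List ℕ} (hσ : isSword p N σ) :
    ∀ j ∈ Icc 1 N, muJ p χ N (σ ++ [j]) = muJ p χ N σ * pt (σ.getLastD 0) j := by
  have hi := getLastD_mem_of_isPsiWord hσ.1
  have hle : ∀ j ∈ Icc 1 N, muJ p χ N (σ ++ [j]) ≤ muJ p χ N σ * pt (σ.getLastD 0) j := by
    intro j hj
    by_cases h0 : muJ p χ N (σ ++ [j]) = 0
    · rw [h0]
      exact mul_nonneg (muJ_nonneg hχpos hσ.1) (hpt0 _ hi j hj)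
    · have hσj := isSword_of_muJ_ne_zero (isPsiWord_append_singleton hσ.1 hj) h0
      rw [hmarkov _ hσj, hmarkov _ hσ, headD_append_of_ne_nil hσ.1.1,
        pword_append_singleton _ hσ.1.1, mul_assoc]
  -- both sides sum to `μ(J_σ)` over `j`, so the inequalities are equalities
  refine (sum_eq_sum_iff_of_le hle).mp ?_
  rw [sum_muJ_append_singleton hp0 hN hpsum hσ.1, ← mul_sum, hpt1 _ hi, mul_one]

lemma fibreProb_eq_or_of_markov (hp0 : ∀ i j, 0 ≤ p i j) (hN : N ≠ 0)
    (hpsum : ∀ i ∈ Icc 1 (2 * N), ∑ j ∈ Icc 1 (2 * N), p i j = 1)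
    (hχpos : ∀ i ∈ Icc 1 (2 * N), 0 < χ i) (hpt0 : ∀ i ∈ Icc 1 N, ∀ j ∈ Icc 1 N, 0 ≤ pt i j)
    (hpt1 : ∀ i ∈ Icc 1 N, ∑ j ∈ Icc 1 N, pt i j = 1)
    (hmarkov : ∀ σ, isSword p N σ → muJ p χ N σ = χt (σ.headD 0) * pword pt σ)
    {i : ℕ} (hi : i ∈ Icc 1 N) :
    (∀ j ∈ Icc 1 N, fibreProb p N i j = fibreProb p N (i + N) j) ∨
      ∀ σ, isSword p N σ → σ.getLastD 0 = i →
        χ (i + N) * Ipart p χ N i σ = χ i * Ipart p χ N (i + N) σ := by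
  have hmix : ∀ σ, isSword p N σ → σ.getLastD 0 = i → ∀ j ∈ Icc 1 N,
      Ipart p χ N i σ * fibreProb p N i j + Ipart p χ N (i + N) σ * fibreProb p N (i + N) j =
        (Ipart p χ N i σ + Ipart p χ N (i + N) σ) * pt i j := by
    rintro σ hσ rfl j hj
    rw [← muJ_append_singleton hp0 hN hσ.1.1, ← muJ_split hN hσ.1.1]
    exact muJ_append_singleton_of_markov hp0 hN hpsum hχpos hpt0 hpt1 hmarkov hσ j hj
  have hinit := hmix [i] (isSword_singleton hi) rfl
  simp only [Ipart_singleton_self hN, Ipart_singleton_add hN] at hinit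
  refine or_iff_not_imp_left.mpr fun hne σ hσ hlast => ?_
  obtain ⟨j, hj, hab⟩ := not_forall₂.mp hne
  exact (eq_or_mul_eq_mul_of_mix_eq (hinit j hj) (hmix σ hσ hlast j hj)).resolve_left hab

end Markov

lemma muJ_eq_reducedMatrix (hp0 : ∀ i j, 0 ≤ p i j) (hN : N ≠ 0)
    (hχpos : ∀ i ∈ Icc 1 (2 * N), 0 < χ i)
    (hcond : ∀ i ∈ Icc 1 N,
      (∀ j ∈ Icc 1 N, fibreProb p N i j = fibreProb p N (i + N) j) ∨
        ∀ σ, isSword p N σ → σ.getLastD 0 = i →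
          χ (i + N) * Ipart p χ N i σ = χ i * Ipart p χ N (i + N) σ) :
    ∀ σ, isPsiWord N σ →
      muJ p χ N σ = (χ (σ.headD 0) + χ (σ.headD 0 + N)) * pword (reducedMatrix p χ N) σ := by
  intro σ
  induction σ using List.reverseRecOn with
  | nil => exact fun h => absurd rfl h.1
  | append_singleton τ j ih =>
    intro hσ
    rcases eq_or_ne τ [] with rfl | hτ
    · simp [muJ_singleton hN, pword]
    have hτψ := isPsiWord_of_append_singleton hτ hσ
    have hi := getLastD_mem_of_isPsiWord hτψ
    have hΩ := mem_Icc_two_mul hi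
    -- off `𝒮*`, both `I`'s vanish, so (b) holds trivially there
    have hprop : fibreProb p N (τ.getLastD 0) j = fibreProb p N (τ.getLastD 0 + N) j ∨
        χ (τ.getLastD 0 + N) * Ipart p χ N (τ.getLastD 0) τ =
          χ (τ.getLastD 0) * Ipart p χ N (τ.getLastD 0 + N) τ := by
      refine (hcond _ hi).imp (fun ha => ha j (hσ.2 j (by simp))) fun hb => ?_
      by_cases hS : isSword p N τ
      · exact hb τ hS rfl
      · simp [Ipart_eq_zero_of_not_isSword hτψ hS]
    rw [muJ_append_singleton hp0 hN hτ,
      mix_eq_mul_div_of_eq_or (add_pos (hχpos _ hΩ.1) (hχpos _ hΩ.2)).ne' hprop,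
      ← muJ_split hN hτ, ih hτψ, headD_append_of_ne_nil hτ, pword_append_singleton _ hτ,
      reducedMatrix, mul_assoc]

lemma reducible_of_fibreProb_eq_or {E : Type*} [MeasurableSpace E] {T : ℕ → ℕ → E → E}
    {J : ℕ → Set E} {μ : Measure E} (hp0 : ∀ i j, 0 ≤ p i j) (hN : N ≠ 0)
    (hpsum : ∀ i ∈ Icc 1 (2 * N), ∑ j ∈ Icc 1 (2 * N), p i j = 1)
    (hχpos : ∀ i ∈ Icc 1 (2 * N), 0 < χ i) (hχsum : ∑ i ∈ Icc 1 (2 * N), χ i = 1)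
    (hμ : ∀ σ, isSword p N σ → μ (Jword T J σ) = ENNReal.ofReal (muJ p χ N σ))
    (hcond : ∀ i ∈ Icc 1 N,
      (∀ j ∈ Icc 1 N, fibreProb p N i j = fibreProb p N (i + N) j) ∨
        ∀ σ, isSword p N σ → σ.getLastD 0 = i →
          χ (i + N) * Ipart p χ N i σ = χ i * Ipart p χ N (i + N) σ) :
    reducible p N T J μ := by
  have hχ : ∀ i ∈ Icc 1 N, 0 < χ i ∧ 0 < χ (i + N) := fun i hi =>
    ⟨hχpos _ (mem_Icc_two_mul hi).1, hχpos _ (mem_Icc_two_mul hi).2⟩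
  have hfibre0 : ∀ k j, 0 ≤ fibreProb p N k j := fun k j => add_nonneg (hp0 _ _) (hp0 _ _)
  refine ⟨reducedMatrix p χ N, fun i => χ i + χ (i + N), fun i hi j _ => ?_, fun i hi => ?_,
    fun i hi => add_pos (hχ i hi).1 (hχ i hi).2, (sum_Icc_add_shift χ N).trans hχsum,
    fun σ hσ => by rw [hμ σ hσ, muJ_eq_reducedMatrix hp0 hN hχpos hcond σ hσ.1]⟩
  · exact div_nonneg (add_nonneg (mul_nonneg (hχ i hi).1.le (hfibre0 _ _))
      (mul_nonneg (hχ i hi).2.le (hfibre0 _ _))) (add_pos (hχ i hi).1 (hχ i hi).2).le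
  · simp only [reducedMatrix]
    rw [← sum_div, sum_add_distrib, ← mul_sum, ← mul_sum, sum_fibreProb hpsum (mem_Icc_two_mul hi).1,
      sum_fibreProb hpsum (mem_Icc_two_mul hi).2, mul_one, mul_one,
      div_self (add_pos (hχ i hi).1 (hχ i hi).2).ne']

end Reducibility

theorem stmt0_general
    (N q : ℕ) (hN : 2 ≤ N)
    (p : ℕ → ℕ → ℝ) (χ : ℕ → ℝ)
    (hp0 : ∀ i j, 0 ≤ p i j)
    (hpsum : ∀ i ∈ Finset.Icc 1 (2 * N), ∑ j ∈ Finset.Icc 1 (2 * N), p i j = 1)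
    (hχpos : ∀ i ∈ Finset.Icc 1 (2 * N), 0 < χ i)
    (hχsum : ∑ i ∈ Finset.Icc 1 (2 * N), χ i = 1)
    (T : ℕ → ℕ → EuclideanSpace ℝ (Fin q) → EuclideanSpace ℝ (Fin q))
    (J : ℕ → Set (EuclideanSpace ℝ (Fin q)))
    (μ : Measure (EuclideanSpace ℝ (Fin q)))
    (hμ : ∀ σ : List ℕ, isSword p N σ →
      μ (Jword T J σ) = ENNReal.ofReal (muJ p χ N σ)) :
    reducible p N T J μ ↔
      ∀ i ∈ Finset.Icc 1 N,
        (∀ j ∈ Finset.Icc 1 N, p i j + p i (j + N) = p (i + N) j + p (i + N) (j + N)) ∨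
        (∀ σ : List ℕ, isSword p N σ → σ.getLastD 0 = i →
          χ (i + N) * Ipart p χ N i σ = χ i * Ipart p χ N (i + N) σ) := by
  have hN0 : N ≠ 0 := by omega
  constructor
  · rintro ⟨pt, χt, hpt0, hpt1, hχt, -, hrep⟩ i hi
    exact fibreProb_eq_or_of_markov hp0 hN0 hpsum hχpos hpt0 hpt1
      (fun σ hσ => muJ_eq_of_measure_eq hχpos hμ hpt0 hχt hrep hσ) hi
  · exact reducible_of_fibreProb_eq_or hp0 hN0 hpsum hχpos hχsum hμ

/-- **Theorem (Zhu, Theorem 1.1(1)).** Assume (A2) and (A5). Then `μ` is reducible if and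
only if for every `i ∈ Ψ` either (a) `p_{i,j} + p_{i,j⁺} = p_{i⁺,j} + p_{i⁺,j⁺}` for every
`j ∈ Ψ`, or (b) `χ_{i⁺} I_{1,σ} = χ_i I_{2,σ}` for every `σ ∈ 𝒮^*(i)`. -/
theorem stmt0
    (N q : ℕ) (hN : 2 ≤ N) (hq : 1 ≤ q) (r : ℝ) (hr : 0 < r)
    (p : ℕ → ℕ → ℝ) (χ : ℕ → ℝ)
    (hp0 : ∀ i j, 0 ≤ p i j)
    (hpsupp : ∀ i j, 0 < p i j → i ∈ Finset.Icc 1 (2 * N) ∧ j ∈ Finset.Icc 1 (2 * N))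
    (hpsum : ∀ i ∈ Finset.Icc 1 (2 * N), ∑ j ∈ Finset.Icc 1 (2 * N), p i j = 1)
    (hχpos : ∀ i ∈ Finset.Icc 1 (2 * N), 0 < χ i)
    (hχsum : ∑ i ∈ Finset.Icc 1 (2 * N), χ i = 1)
    (sr : ℕ → ℕ → ℝ)
    (T : ℕ → ℕ → EuclideanSpace ℝ (Fin q) → EuclideanSpace ℝ (Fin q))
    (J : ℕ → Set (EuclideanSpace ℝ (Fin q)))
    (hTinv : ∀ i ∈ Finset.Icc 1 N, ∀ j ∈ Finset.Icc 1 N, ∀ a b : ℕ,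
      (a = i ∨ a = i + N) → (b = j ∨ b = j + N) → 0 < p a b →
      T a b = T i j ∧ sr a b = sr i j)
    (hsim : ∀ i ∈ Finset.Icc 1 N, ∀ j ∈ Finset.Icc 1 N, isSword p N [i, j] →
      0 < sr i j ∧ sr i j < 1 ∧ ∀ x y, dist (T i j x) (T i j y) = sr i j * dist x y)
    (hJcpt : ∀ i ∈ Finset.Icc 1 N,
      IsCompact (J i) ∧ (J i).Nonempty ∧ closure (interior (J i)) = J i ∧
        Metric.diam (J i) = 1)
    (hJdisj : ∀ i ∈ Finset.Icc 1 N, ∀ j ∈ Finset.Icc 1 N, i ≠ j → Disjoint (J i) (J j))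
    (hJplus : ∀ i ∈ Finset.Icc 1 N, J (i + N) = J i)
    (hnest : ∀ i ∈ Finset.Icc 1 N, ∀ j ∈ Finset.Icc 1 N, isSword p N [i, j] →
      T i j '' J j ⊆ J i)
    (hTdisj : ∀ i ∈ Finset.Icc 1 N, ∀ j ∈ Finset.Icc 1 N, ∀ l ∈ Finset.Icc 1 N,
      isSword p N [i, j] → isSword p N [i, l] → j ≠ l →
      Disjoint (T i j '' J j) (T i l '' J l))
    (μ : Measure (EuclideanSpace ℝ (Fin q))) [IsProbabilityMeasure μ]
    (hμ : ∀ σ : List ℕ, isSword p N σ →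
      μ (Jword T J σ) = ENNReal.ofReal (muJ p χ N σ))
    (hA2 : A2 p N) (hA5 : A5 p N) :
    reducible p N T J μ ↔
      ∀ i ∈ Finset.Icc 1 N,
        (∀ j ∈ Finset.Icc 1 N, p i j + p i (j + N) = p (i + N) j + p (i + N) (j + N)) ∨
        (∀ σ : List ℕ, isSword p N σ → σ.getLastD 0 = i →
          χ (i + N) * Ipart p χ N i σ = χ i * Ipart p χ N (i + N) σ) :=
  stmt0_general N q hN p χ hp0 hpsum hχpos hχsum T J μ hμ

end MTM

end
end

section
/- Assume (A2), (A4), (A5), that χ_i = χ_{i⁺} for every i ∈ Ψ, and that p_{l,i} + p_{l⁺,i} = p_{l,i⁺} + p_{l⁺,i⁺} for every (l,i) ∈ 𝒮₂. Then μ is reducible. -/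
/-! Under (A4) every lift of a word `σ ∈ 𝒮*` is admissible, so `μ(J_σ)` is the sum of
`χ_{τ₁} p_τ` over all `2ⁿ` lifts `τ` of `σ`. Summing out the lifts letter by letter from the
front, the first letter contributes `p_{σ₁,τ₂} + p_{σ₁⁺,τ₂}`, which by the column condition is
`p̃_{σ₁,σ₂} := p_{σ₁,σ₂} + p_{σ₁⁺,σ₂}` whichever lift `τ₂` of `σ₂` is chosen, and the last letter
contributes a factor `2`. As `χ_{σ₁} = χ_{σ₁⁺}`, this gives
`μ(J_σ) = 2χ_{σ₁} p̃_{σ₁,σ₂} ⋯ p̃_{σ_{n-1},σ_n}`, a Markov measure with data `(p̃, 2χ)`; `p̃` is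
row-stochastic because adding rows `l` and `l⁺` of `P` and using the column condition gives
twice its row sum. -/

open scoped Classical ENNReal
open Filter MeasureTheory

noncomputable section

namespace MTM

/-- `p̃_{a,b} = p_{a,b} + p_{a⁺,b}`. -/
def foldedKernel (p : ℕ → ℕ → ℝ) (N a b : ℕ) : ℝ := p a b + p (a + N) b

/-- `p_{a,b} + p_{a⁺,b} = p_{a,b⁺} + p_{a⁺,b⁺}` on `Ψ²`. -/
def ColumnBalanced (p : ℕ → ℕ → ℝ) (N : ℕ) : Prop :=
  ∀ a ∈ Finset.Icc 1 N, ∀ b ∈ Finset.Icc 1 N, foldedKernel p N a (b + N) = foldedKernel p N a b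

/-- `ℳ_{a,b} = 𝒩_{a,b}`. -/
def LiftsAdmissible (p : ℕ → ℕ → ℝ) (N a b : ℕ) : Prop :=
  0 < p a b ∧ 0 < p a (b + N) ∧ 0 < p (a + N) b ∧ 0 < p (a + N) (b + N)

theorem sum_Icc_two_mul {M : Type*} [AddCommMonoid M] (N : ℕ) (f : ℕ → M) :
    ∑ j ∈ Finset.Icc 1 (2 * N), f j = ∑ i ∈ Finset.Icc 1 N, (f i + f (i + N)) := by
  rw [Finset.sum_add_distrib, ← Finset.Ico_add_one_right_eq_Icc, ← Finset.Ico_add_one_right_eq_Icc,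
    ← Finset.sum_Ico_consecutive f (show 1 ≤ N + 1 by omega) (show N + 1 ≤ 2 * N + 1 by omega),
    Finset.sum_Ico_add' f 1 (N + 1) N, add_comm 1 N, show N + 1 + N = 2 * N + 1 by ring]

section Lifts

variable {N : ℕ}

theorem mem_lifts_cons {τ t : List ℕ} {i : ℕ} :
    τ ∈ lifts N (i :: t) ↔ ∃ a l, (a = i ∨ a = i + N) ∧ l ∈ lifts N t ∧ τ = a :: l := by
  simp only [lifts, Finset.mem_biUnion, Finset.mem_insert, Finset.mem_singleton]
  grind

theorem self_mem_lifts : ∀ σ : List ℕ, σ ∈ lifts N σ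
  | [] => by simp [lifts]
  | i :: t => mem_lifts_cons.2 ⟨i, t, Or.inl rfl, self_mem_lifts t, rfl⟩

theorem sum_lifts_cons {M : Type*} [AddCommMonoid M] (hN : N ≠ 0) (f : List ℕ → M)
    (i : ℕ) (t : List ℕ) :
    ∑ τ ∈ lifts N (i :: t), f τ = ∑ l ∈ lifts N t, (f (i :: l) + f ((i + N) :: l)) := by
  rw [lifts, Finset.sum_biUnion]
  · refine Finset.sum_congr rfl fun l _ => Finset.sum_pair ?_
    simpa using hN
  · intro l _ l' _ hne
    simp only [Finset.disjoint_left, Finset.mem_insert, Finset.mem_singleton]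
    rintro τ (rfl | rfl) (h | h) <;> exact hne (List.cons.inj h).2

theorem mem_Gam {p : ℕ → ℕ → ℝ} {σ τ : List ℕ} :
    τ ∈ Gam p N σ ↔ τ ∈ lifts N σ ∧ τ.IsChain (edge p) :=
  Finset.mem_filter

theorem isChain_edge_of_mem_lifts {p : ℕ → ℕ → ℝ} :
    ∀ {σ τ : List ℕ}, σ.IsChain (LiftsAdmissible p N) → τ ∈ lifts N σ → τ.IsChain (edge p)
  | [], τ, _, hτ => by simp_all [lifts]
  | [_], τ, _, hτ => by
    obtain ⟨a, l, -, hl, rfl⟩ := mem_lifts_cons.1 hτ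
    simp_all [lifts]
  | i :: j :: t, τ, hσ, hτ => by
    obtain ⟨⟨h₁, h₂, h₃, h₄⟩, ht⟩ := List.isChain_cons_cons.1 hσ
    obtain ⟨a, l, ha, hl, rfl⟩ := mem_lifts_cons.1 hτ
    obtain ⟨b, m, hb, -, rfl⟩ := mem_lifts_cons.1 hl
    refine List.isChain_cons_cons.2 ⟨?_, isChain_edge_of_mem_lifts ht hl⟩
    rcases ha with rfl | rfl <;> rcases hb with rfl | rfl <;> assumption

theorem Gam_eq_lifts {p : ℕ → ℕ → ℝ} {σ : List ℕ} (hσ : σ.IsChain (LiftsAdmissible p N)) :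
    Gam p N σ = lifts N σ :=
  Finset.filter_true_of_mem fun _ hτ => isChain_edge_of_mem_lifts hσ hτ

theorem liftsAdmissible_of_A4 {p : ℕ → ℕ → ℝ} (hA4 : A4 p N) {i j a b : ℕ}
    (hi : i ∈ Finset.Icc 1 N) (hj : j ∈ Finset.Icc 1 N) (ha : a = i ∨ a = i + N)
    (hb : b = j ∨ b = j + N) (hab : 0 < p a b) : LiftsAdmissible p N i j := by
  refine (hA4 i hi j hj).resolve_left fun hzero => hab.ne' ?_
  rcases ha with rfl | rfl <;> rcases hb with rfl | rfl <;> simp [hzero]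

theorem isChain_liftsAdmissible_of_mem_Gam {p : ℕ → ℕ → ℝ} (hA4 : A4 p N) :
    ∀ {σ τ : List ℕ}, (∀ x ∈ σ, x ∈ Finset.Icc 1 N) → τ ∈ Gam p N σ →
      σ.IsChain (LiftsAdmissible p N)
  | [], _, _, _ => List.isChain_nil
  | [_], _, _, _ => List.isChain_singleton _
  | i :: j :: t, τ, hσ, hτ => by
    obtain ⟨hτ, hτe⟩ := mem_Gam.1 hτ
    obtain ⟨a, l, ha, hl, rfl⟩ := mem_lifts_cons.1 hτ
    obtain ⟨b, m, hb, -, rfl⟩ := mem_lifts_cons.1 hl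
    obtain ⟨hab, hle⟩ := List.isChain_cons_cons.1 hτe
    refine List.isChain_cons_cons.2 ⟨liftsAdmissible_of_A4 hA4 (hσ i (by simp))
      (hσ j (by simp)) ha hb hab, ?_⟩
    exact isChain_liftsAdmissible_of_mem_Gam hA4 (fun x hx => hσ x (List.mem_cons_of_mem _ hx))
      (mem_Gam.2 ⟨hl, hle⟩)

end Lifts

section Folding

variable {p : ℕ → ℕ → ℝ} {N : ℕ}

theorem isSword_pair {i j : ℕ} (hi : i ∈ Finset.Icc 1 N) (hj : j ∈ Finset.Icc 1 N)
    (hp : 0 < p i j) : isSword p N [i, j] := by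
  refine ⟨⟨by simp, ?_⟩, ⟨[i, j], mem_Gam.2 ⟨self_mem_lifts _, List.isChain_pair.2 hp⟩⟩⟩
  simp only [List.mem_cons, List.not_mem_nil, or_false]
  rintro x (rfl | rfl) <;> assumption

theorem columnBalanced_of_A4 (hA4 : A4 p N)
    (hcol : ∀ l ∈ Finset.Icc 1 N, ∀ i ∈ Finset.Icc 1 N, isSword p N [l, i] →
      p l i + p (l + N) i = p l (i + N) + p (l + N) (i + N)) :
    ColumnBalanced p N := by
  intro a ha b hb
  rcases hA4 a ha b hb with ⟨h₁, h₂, h₃, h₄⟩ | ⟨hab, -⟩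
  · simp [foldedKernel, h₁, h₂, h₃, h₄]
  · exact (hcol a ha b hb (isSword_pair ha hb hab)).symm

theorem sum_foldedKernel_eq_one
    (hbal : ColumnBalanced p N)
    (hpsum : ∀ i ∈ Finset.Icc 1 (2 * N), ∑ j ∈ Finset.Icc 1 (2 * N), p i j = 1)
    {l : ℕ} (hl : l ∈ Finset.Icc 1 N) : ∑ i ∈ Finset.Icc 1 N, foldedKernel p N l i = 1 := by
  have hl' : l ∈ Finset.Icc 1 (2 * N) ∧ l + N ∈ Finset.Icc 1 (2 * N) := by
    simp only [Finset.mem_Icc] at hl ⊢; omega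
  have hrows := congrArg₂ (· + ·) (hpsum l hl'.1) (hpsum (l + N) hl'.2)
  have hpair : ∀ i ∈ Finset.Icc 1 N,
      p l i + p l (i + N) + (p (l + N) i + p (l + N) (i + N)) = 2 * foldedKernel p N l i := by
    intro i hi
    have := hbal l hl i hi
    simp only [foldedKernel] at this ⊢
    linarith
  simp only [sum_Icc_two_mul, ← Finset.sum_add_distrib] at hrows
  rw [Finset.sum_congr rfl hpair, ← Finset.mul_sum] at hrows
  linarith

theorem sum_pword_lifts (hbal : ColumnBalanced p N) (hN : N ≠ 0) :
    ∀ {σ : List ℕ}, σ ≠ [] → (∀ x ∈ σ, x ∈ Finset.Icc 1 N) →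
      ∑ τ ∈ lifts N σ, pword p τ = 2 * pword (foldedKernel p N) σ
  | [i], _, _ => by
    rw [sum_lifts_cons hN, lifts, Finset.sum_singleton]
    norm_num [pword]
  | i :: j :: t, _, hσ => by
    have hj : j ∈ Finset.Icc 1 N := hσ j (by simp)
    have hjt : ∀ x ∈ j :: t, x ∈ Finset.Icc 1 N := fun x hx => hσ x (List.mem_cons_of_mem _ hx)
    have hstep : ∀ l ∈ lifts N (j :: t),
        pword p (i :: l) + pword p ((i + N) :: l) = foldedKernel p N i j * pword p l := by
      intro l hl
      obtain ⟨b, m, hb, -, rfl⟩ := mem_lifts_cons.1 hl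
      have hfold : p i b + p (i + N) b = foldedKernel p N i j := by
        rcases hb with rfl | rfl
        · rfl
        · exact hbal i (hσ i (by simp)) j hj
      simp only [pword]
      rw [← add_mul, hfold]
    rw [sum_lifts_cons hN, Finset.sum_congr rfl hstep, ← Finset.mul_sum,
      sum_pword_lifts hbal hN (List.cons_ne_nil j t) hjt]
    simp only [pword]
    ring

theorem muJ_eq_of_isChain (hbal : ColumnBalanced p N) (hN : N ≠ 0) {χ : ℕ → ℝ}
    (hχ : ∀ i ∈ Finset.Icc 1 N, χ i = χ (i + N)) {σ : List ℕ} (hσ : σ ≠ [])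
    (hσΨ : ∀ x ∈ σ, x ∈ Finset.Icc 1 N) (hadm : σ.IsChain (LiftsAdmissible p N)) :
    muJ p χ N σ = 2 * χ (σ.headD 0) * pword (foldedKernel p N) σ := by
  obtain ⟨i, t, rfl⟩ := List.exists_cons_of_ne_nil hσ
  have hhead : ∀ τ ∈ lifts N (i :: t), χ (τ.headD 0) = χ i := by
    intro τ hτ
    obtain ⟨a, l, ha | ha, -, rfl⟩ := mem_lifts_cons.1 hτ
    · simp [ha]
    · simp [ha, ← hχ i (hσΨ i (by simp))]
  rw [muJ, Gam_eq_lifts hadm, Finset.sum_congr rfl fun τ hτ => by rw [hhead τ hτ],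
    ← Finset.mul_sum, sum_pword_lifts hbal hN hσ hσΨ]
  simp only [List.headD_cons]
  ring

end Folding

theorem stmt3_general
    (N q : ℕ) (hN : 2 ≤ N)
    (p : ℕ → ℕ → ℝ) (χ : ℕ → ℝ)
    (hp0 : ∀ i j, 0 ≤ p i j)
    (hpsum : ∀ i ∈ Finset.Icc 1 (2 * N), ∑ j ∈ Finset.Icc 1 (2 * N), p i j = 1)
    (hχpos : ∀ i ∈ Finset.Icc 1 (2 * N), 0 < χ i)
    (hχsum : ∑ i ∈ Finset.Icc 1 (2 * N), χ i = 1)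
    (T : ℕ → ℕ → EuclideanSpace ℝ (Fin q) → EuclideanSpace ℝ (Fin q))
    (J : ℕ → Set (EuclideanSpace ℝ (Fin q)))
    (μ : Measure (EuclideanSpace ℝ (Fin q)))
    (hμ : ∀ σ : List ℕ, isSword p N σ →
      μ (Jword T J σ) = ENNReal.ofReal (muJ p χ N σ))
    (hA4 : A4 p N)
    (hb1 : ∀ i ∈ Finset.Icc 1 N, χ i = χ (i + N))
    (hcol : ∀ l ∈ Finset.Icc 1 N, ∀ i ∈ Finset.Icc 1 N, isSword p N [l, i] →
      p l i + p (l + N) i = p l (i + N) + p (l + N) (i + N)) :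
    reducible p N T J μ := by
  have hN0 : N ≠ 0 := by omega
  have hbal := columnBalanced_of_A4 hA4 hcol
  refine ⟨foldedKernel p N, fun i => 2 * χ i, fun i _ j _ => add_nonneg (hp0 i j) (hp0 _ j),
    fun l hl => sum_foldedKernel_eq_one hbal hpsum hl, fun i hi => ?_, ?_, ?_⟩
  · exact mul_pos two_pos (hχpos i (by simp only [Finset.mem_Icc] at hi ⊢; omega))
  · rw [sum_Icc_two_mul] at hχsum
    rw [← hχsum]
    exact Finset.sum_congr rfl fun i hi => by rw [← hb1 i hi]; ring
  · rintro σ ⟨⟨hσ, hσΨ⟩, τ, hτ⟩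
    rw [hμ σ ⟨⟨hσ, hσΨ⟩, τ, hτ⟩, muJ_eq_of_isChain hbal hN0 hb1 hσ hσΨ
      (isChain_liftsAdmissible_of_mem_Gam hA4 hσΨ hτ)]

/-- **Corollary 2.4.** Assume (A2), (A4), (A5), that `χ_i = χ_{i⁺}` for every `i ∈ Ψ` and
that `p_{l,i} + p_{l⁺,i} = p_{l,i⁺} + p_{l⁺,i⁺}` for every `(l,i) ∈ 𝒮₂`. Then `μ` is
reducible. -/
theorem stmt3
    (N q : ℕ) (hN : 2 ≤ N) (hq : 1 ≤ q) (r : ℝ) (hr : 0 < r)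
    (p : ℕ → ℕ → ℝ) (χ : ℕ → ℝ)
    (hp0 : ∀ i j, 0 ≤ p i j)
    (hpsupp : ∀ i j, 0 < p i j → i ∈ Finset.Icc 1 (2 * N) ∧ j ∈ Finset.Icc 1 (2 * N))
    (hpsum : ∀ i ∈ Finset.Icc 1 (2 * N), ∑ j ∈ Finset.Icc 1 (2 * N), p i j = 1)
    (hχpos : ∀ i ∈ Finset.Icc 1 (2 * N), 0 < χ i)
    (hχsum : ∑ i ∈ Finset.Icc 1 (2 * N), χ i = 1)
    (sr : ℕ → ℕ → ℝ)
    (T : ℕ → ℕ → EuclideanSpace ℝ (Fin q) → EuclideanSpace ℝ (Fin q))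
    (J : ℕ → Set (EuclideanSpace ℝ (Fin q)))
    (hTinv : ∀ i ∈ Finset.Icc 1 N, ∀ j ∈ Finset.Icc 1 N, ∀ a b : ℕ,
      (a = i ∨ a = i + N) → (b = j ∨ b = j + N) → 0 < p a b →
      T a b = T i j ∧ sr a b = sr i j)
    (hsim : ∀ i ∈ Finset.Icc 1 N, ∀ j ∈ Finset.Icc 1 N, isSword p N [i, j] →
      0 < sr i j ∧ sr i j < 1 ∧ ∀ x y, dist (T i j x) (T i j y) = sr i j * dist x y)
    (hJcpt : ∀ i ∈ Finset.Icc 1 N,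
      IsCompact (J i) ∧ (J i).Nonempty ∧ closure (interior (J i)) = J i ∧
        Metric.diam (J i) = 1)
    (hJdisj : ∀ i ∈ Finset.Icc 1 N, ∀ j ∈ Finset.Icc 1 N, i ≠ j → Disjoint (J i) (J j))
    (hJplus : ∀ i ∈ Finset.Icc 1 N, J (i + N) = J i)
    (hnest : ∀ i ∈ Finset.Icc 1 N, ∀ j ∈ Finset.Icc 1 N, isSword p N [i, j] →
      T i j '' J j ⊆ J i)
    (hTdisj : ∀ i ∈ Finset.Icc 1 N, ∀ j ∈ Finset.Icc 1 N, ∀ l ∈ Finset.Icc 1 N,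
      isSword p N [i, j] → isSword p N [i, l] → j ≠ l →
      Disjoint (T i j '' J j) (T i l '' J l))
    (μ : Measure (EuclideanSpace ℝ (Fin q))) [IsProbabilityMeasure μ]
    (hμ : ∀ σ : List ℕ, isSword p N σ →
      μ (Jword T J σ) = ENNReal.ofReal (muJ p χ N σ))
    (hA2 : A2 p N) (hA4 : A4 p N) (hA5 : A5 p N)
    (hb1 : ∀ i ∈ Finset.Icc 1 N, χ i = χ (i + N))
    (hcol : ∀ l ∈ Finset.Icc 1 N, ∀ i ∈ Finset.Icc 1 N, isSword p N [l, i] →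
      p l i + p (l + N) i = p l (i + N) + p (l + N) (i + N)) :
    reducible p N T J μ :=
  stmt3_general N q hN p χ hp0 hpsum hχpos hχsum T J μ hμ hA4 hb1 hcol

end MTM

end
end
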